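/- Conditional bias overestimates the total bias: for a fixed label y, E_Z D_F[y || ℰ(X|Z)] = D_F[y || ℰX] + E_Z D_F[ℰX || ℰ(X|Z)], and the correction term E_Z D_F[ℰX || ℰ(X|Z)] is nonnegative. -/

import Mathlib

/-! The Bregman divergence satisfies the three-point identity
`D(y‖c) = D(x‖c) + D(y‖x) + ⟪∇F x - ∇F c, y - x⟫`. Take `x = ℰX`, `c = ℰ(X|Z)` and integrate:
by the tower property `E[∇F(ℰ(X|Z))] = E[∇F(X)] = ∇F(ℰX)`, so the cross term vanishes. The
correction term is nonnegative since, by the gradient inequality, Bregman divergences of a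
convex function are. -/

open MeasureTheory

theorem ConvexOn.le_sub_of_hasFDerivAt {E : Type*} [NormedAddCommGroup E] [NormedSpace ℝ E]
    {S : Set E} {F : E → ℝ} {F' : E →L[ℝ] ℝ} (hF : ConvexOn ℝ S F) {x z : E}
    (hx : x ∈ S) (hz : z ∈ S) (hF' : HasFDerivAt F F' x) :
    F' (z - x) ≤ F z - F x := by
  -- along the segment from `x` to `z`, the derivative at `0` is below the secant slope on `[0, 1]`
  let line := AffineMap.lineMap (k := ℝ) x z
  have hline : HasDerivAt (F ∘ line) (F' (z - x)) 0 := by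
    refine HasFDerivAt.comp_hasDerivAt (0 : ℝ) ?_ AffineMap.hasDerivAt_lineMap
    simpa [line] using hF'
  have := (hF.comp_affineMap line).le_slope_of_hasDerivAt (x := 0) (y := 1)
    (by simpa [line] using hx) (by simpa [line] using hz) zero_lt_one hline
  simpa [slope_def_field, line] using this

section Bregman

variable {E : Type*} [NormedAddCommGroup E] [InnerProductSpace ℝ E]

def bregmanDiv (F : E → ℝ) (f' : E → E) (y x : E) : ℝ :=
  F y - F x - inner ℝ (f' x) (y - x)

theorem bregmanDiv_nonneg [CompleteSpace E] {S : Set E} {F : E → ℝ} {f' : E → E}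
    (hF : ConvexOn ℝ S F) {x y : E} (hx : x ∈ S) (hy : y ∈ S) (hf' : HasGradientAt F (f' x) x) :
    0 ≤ bregmanDiv F f' y x := by
  have := hF.le_sub_of_hasFDerivAt hx hy hf'.hasFDerivAt
  rw [InnerProductSpace.toDual_apply_apply] at this
  unfold bregmanDiv
  linarith

theorem bregmanDiv_three_point (F : E → ℝ) (f' : E → E) (x y z : E) :
    bregmanDiv F f' y z =
      bregmanDiv F f' x z + bregmanDiv F f' y x + inner ℝ (f' x - f' z) (y - x) := by
  simp only [bregmanDiv, inner_sub_left, inner_sub_right]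
  ring

theorem integral_bregmanDiv_eq_add [CompleteSpace E] {Ω : Type*} [MeasurableSpace Ω]
    {μ : Measure Ω} [IsProbabilityMeasure μ] (F : E → ℝ) (f' : E → E) {C : Ω → E} {x : E}
    (hint : Integrable (fun ω => bregmanDiv F f' x (C ω)) μ)
    (hf'C : Integrable (fun ω => f' (C ω)) μ) (hmean : ∫ ω, f' (C ω) ∂μ = f' x) (y : E) :
    ∫ ω, bregmanDiv F f' y (C ω) ∂μ = bregmanDiv F f' y x + ∫ ω, bregmanDiv F f' x (C ω) ∂μ := by
  have hf'C_dev : Integrable (fun ω => f' x - f' (C ω)) μ := (integrable_const _).sub hf'C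
  have hinner : ∫ ω, inner ℝ (f' x - f' (C ω)) (y - x) ∂μ = 0 := by
    simp_rw [real_inner_comm (y - x)]
    rw [integral_inner hf'C_dev, integral_sub (integrable_const _) hf'C, hmean,
      integral_const, probReal_univ, one_smul, sub_self, inner_zero_right]
  calc ∫ ω, bregmanDiv F f' y (C ω) ∂μ
      = ∫ ω, (bregmanDiv F f' x (C ω) + bregmanDiv F f' y x
          + inner ℝ (f' x - f' (C ω)) (y - x)) ∂μ :=
        integral_congr_ae (ae_of_all _ fun ω => bregmanDiv_three_point F f' x y (C ω))
    _ = bregmanDiv F f' y x + ∫ ω, bregmanDiv F f' x (C ω) ∂μ := by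
        have hsum : Integrable (fun ω => bregmanDiv F f' x (C ω) + bregmanDiv F f' y x) μ :=
          hint.add (integrable_const _)
        rw [integral_add hsum (hf'C_dev.inner_const _),
          integral_add hint (integrable_const _), hinner, integral_const, probReal_univ, one_smul]
        ring

end Bregman

theorem conditional_bias_overestimates_general {d : ℕ}
    (S : Set (EuclideanSpace ℝ (Fin d)))
    (F : EuclideanSpace ℝ (Fin d) → ℝ)
    (f' : EuclideanSpace ℝ (Fin d) → EuclideanSpace ℝ (Fin d))
    (hF : StrictConvexOn ℝ S F)
    (hdiff : ∀ x ∈ S, HasGradientAt F (f' x) x)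
    (D : EuclideanSpace ℝ (Fin d) → EuclideanSpace ℝ (Fin d) → ℝ)
    (hD : ∀ y x, D y x = F y - F x - ((inner ℝ (f' x) (y - x) : ℝ)))
    {Ω β : Type*} [MeasurableSpace Ω] [MeasurableSpace β]
    (μ : Measure Ω) [IsProbabilityMeasure μ]
    (X : Ω → EuclideanSpace ℝ (Fin d)) (Z : Ω → β)
    (hZm : Measurable Z)
    (EX : EuclideanSpace ℝ (Fin d))
    (hrange : f' EX = ∫ ω, f' (X ω) ∂μ) (hmem : EX ∈ S)
    (C : Ω → EuclideanSpace ℝ (Fin d))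
    (hCrange : ∀ᵐ ω ∂μ,
      f' (C ω) = (μ[(fun ω' => f' (X ω')) | MeasurableSpace.comap Z inferInstance]) ω)
    (hCS : ∀ᵐ ω ∂μ, C ω ∈ S)
    (hCint : Integrable (fun ω => f' (C ω)) μ)
    (y : EuclideanSpace ℝ (Fin d))
    (hintEXC : Integrable (fun ω => D EX (C ω)) μ) :
    (∫ ω, D y (C ω) ∂μ = D y EX + ∫ ω, D EX (C ω) ∂μ) ∧
      0 ≤ ∫ ω, D EX (C ω) ∂μ := by
  obtain rfl : D = bregmanDiv F f' := funext₂ hD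
  have hmean : ∫ ω, f' (C ω) ∂μ = f' EX := by
    rw [integral_congr_ae hCrange, integral_condExp hZm.comap_le, hrange]
  refine ⟨integral_bregmanDiv_eq_add F f' hintEXC hCint hmean y, integral_nonneg_of_ae ?_⟩
  filter_upwards [hCS] with ω hω
  exact bregmanDiv_nonneg hF.convexOn hω hmem (hdiff _ hω)

/-- Conditional bias overestimates the total bias:
`E_Z D_F[y ‖ ℰ(X|Z)] = D_F[y ‖ ℰX] + E_Z D_F[ℰX ‖ ℰ(X|Z)]`, and the correction term
`E_Z D_F[ℰX ‖ ℰ(X|Z)]` is nonnegative. -/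
theorem conditional_bias_overestimates {d : ℕ}
    (S : Set (EuclideanSpace ℝ (Fin d))) (hSc : IsClosed S) (hSv : Convex ℝ S)
    (F : EuclideanSpace ℝ (Fin d) → ℝ)
    (f' g : EuclideanSpace ℝ (Fin d) → EuclideanSpace ℝ (Fin d))
    (hF : StrictConvexOn ℝ S F)
    (hdiff : ∀ x ∈ S, HasGradientAt F (f' x) x)
    (hg : ∀ x ∈ S, g (f' x) = x)
    (D : EuclideanSpace ℝ (Fin d) → EuclideanSpace ℝ (Fin d) → ℝ)
    (hD : ∀ y x, D y x = F y - F x - ((inner ℝ (f' x) (y - x) : ℝ)))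
    {Ω β : Type*} [MeasurableSpace Ω] [MeasurableSpace β]
    (μ : Measure Ω) [IsProbabilityMeasure μ]
    (X : Ω → EuclideanSpace ℝ (Fin d)) (Z : Ω → β)
    (hXm : AEMeasurable X μ) (hZm : Measurable Z)
    (hXS : ∀ᵐ ω ∂μ, X ω ∈ S)
    (hdint : Integrable (fun ω => f' (X ω)) μ)
    (EX : EuclideanSpace ℝ (Fin d)) (hEX : EX = g (∫ ω, f' (X ω) ∂μ))
    (hrange : f' EX = ∫ ω, f' (X ω) ∂μ) (hmem : EX ∈ S)
    (C : Ω → EuclideanSpace ℝ (Fin d))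
    (hC : ∀ ω, C ω = g ((μ[(fun ω' => f' (X ω')) | MeasurableSpace.comap Z inferInstance]) ω))
    (hCrange : ∀ᵐ ω ∂μ,
      f' (C ω) = (μ[(fun ω' => f' (X ω')) | MeasurableSpace.comap Z inferInstance]) ω)
    (hCS : ∀ᵐ ω ∂μ, C ω ∈ S)
    (hFCint : Integrable (fun ω => F (C ω)) μ)
    (hCint : Integrable (fun ω => f' (C ω)) μ)
    (y : EuclideanSpace ℝ (Fin d)) (hy : y ∈ S)
    (hintyC : Integrable (fun ω => D y (C ω)) μ)
    (hintEXC : Integrable (fun ω => D EX (C ω)) μ) :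
    (∫ ω, D y (C ω) ∂μ = D y EX + ∫ ω, D EX (C ω) ∂μ) ∧
      0 ≤ ∫ ω, D EX (C ω) ∂μ :=
  conditional_bias_overestimates_general S F f' hF hdiff D hD μ X Z hZm EX hrange hmem C hCrange hCS
    hCint y hintEXC
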